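/- arXiv:1712.07222 — 3 statements merged into one kernel-verified Lean document; each statement's English description precedes it below -/
import Mathlib

section
/- Let s be a positive integer and let x and x' be binary strings, all of whose runs have length at most s. Suppose a string y can be obtained from x, and also from x', by deleting a single symbol 0 that constitutes a run of length 1 whose two neighboring runs of ones have lengths 1 and ℓ for some ℓ ≥ 3 (the value of ℓ may differ between x and x'). If τ_{≥2}(x) = τ_{≥2}(x') and Σ_{i odd} τ_1(x)_i ≡ Σ_{i odd} τ_1(x')_i (mod s+1), then τ_1(x) = τ_1(x'). In other words, τ_1(x) is determined by y, τ_{≥2}(x), and the value Σ_{i odd} τ_1(x)_i mod (s+1). -/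
/-- Delete from `x` the symbols at the positions in `S`. -/
def deleteIdxs (x : List Bool) (S : Finset ℕ) : List Bool :=
  ((List.range x.length).filter (fun i => decide (i ∉ S))).map (fun i => x.getD i false)

/-- `w` occurs in `x` at position `i`. -/
def occursAt (w x : List Bool) (i : ℕ) : Prop := w <+: x.drop i

/-- The number of (possibly overlapping) occurrences of `w` in `x`. -/
def Nw (w x : List Bool) : ℕ :=
  ((Finset.range x.length).filter (fun i => w <+: x.drop i)).card

/-- The position in the shortened string of the junction produced by deleting position `k`. -/
def junction (S : Finset ℕ) (k : ℕ) : ℕ :=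
  ((Finset.range k).filter (fun m => m ∉ S)).card

/-- `w` is preserved from `x` to `y`: some set `S` of deleted positions realizing `y`
destroys no occurrence of `w` in `x` and no occurrence of `w` in `y` spans a junction. -/
def Preserved (w x y : List Bool) : Prop :=
  ∃ S : Finset ℕ,
    (∀ k ∈ S, k < x.length) ∧
    S.card + y.length = x.length ∧
    deleteIdxs x S = y ∧
    (∀ i, occursAt w x i → ∀ k ∈ S, ¬ (i ≤ k ∧ k < i + w.length)) ∧
    (∀ j, occursAt w y j → ∀ k ∈ S, ¬ (j < junction S k ∧ junction S k < j + w.length))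

/-- `x` has a (maximal) run of length `ℓ` starting at position `i`. -/
def runAt (x : List Bool) (i ℓ : ℕ) : Prop :=
  0 < ℓ ∧ i + ℓ ≤ x.length ∧
  (∀ j, i ≤ j → j < i + ℓ → x.getD j false = x.getD i false) ∧
  (i = 0 ∨ x.getD (i - 1) false ≠ x.getD i false) ∧
  (i + ℓ = x.length ∨ x.getD (i + ℓ) false ≠ x.getD i false)

/-- position `k` of `x` lies in a run of length `ℓ`. -/
def inRun (x : List Bool) (k ℓ : ℕ) : Prop := ∃ i, runAt x i ℓ ∧ i ≤ k ∧ k < i + ℓ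

def w0000 : List Bool := [false, false, false, false]
def w1111 : List Bool := [true, true, true, true]
def w11011 : List Bool := [true, true, false, true, true]
def w110011 : List Bool := [true, true, false, false, true, true]

/-- The set of strings obtainable from `x` by deleting two symbols. -/
def D2 (x : List Bool) : Set (List Bool) :=
  { y | ∃ i j : ℕ, i < j ∧ j < x.length ∧ y = deleteIdxs x ({i, j} : Finset ℕ) }

/-- run-length representation of the runs of ones, in order. -/
def tau1 (x : List Bool) : List ℕ :=
  ((x.splitBy (· == ·)).filter (fun r => r.headD false)).map List.length

/-- the subsequence of `tau1` of entries at least 2. -/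
def tauGe2 (x : List Bool) : List ℕ := (tau1 x).filter (fun ℓ => decide (2 ≤ ℓ))

/-- sum of the odd-indexed entries. -/
def oddIdxSum (l : List ℕ) : ℕ :=
  ((Finset.range l.length).filter (fun i => i % 2 = 1)).sum (fun i => l.getD i 0)

/-!
Deleting the lone `0` merges its neighbouring runs `1` and `ℓ` into one run of length `ℓ + 1`:
`τ₁(y)` arises from `τ₁(x) = P ++ [1, ℓ] ++ Q` or `P ++ [ℓ, 1] ++ Q` by replacing the pair with
`ℓ + 1`, and `τ≥2(x)` arises from `τ₁(y)` by dropping the ones and lowering that entry to `ℓ`.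
The merged entry is the only one changed by this, so `τ₁(y)` and `τ≥2(x)` locate it and determine
`P`, `ℓ` and `Q`. What remains is the order of the pair, and swapping it changes the odd-index sum
by `ℓ - 1`, which is not divisible by `s + 1` since `2 ≤ ℓ ≤ s`.
-/

open List

theorem runAt.take_drop {x : List Bool} {i ℓ : ℕ} (h : runAt x i ℓ) :
    (x.drop i).take ℓ = replicate ℓ (x.getD i false) := by
  obtain ⟨-, hlen, hconst, -, -⟩ := h
  refine eq_replicate_iff.2 ⟨by simp; omega, fun b hb => ?_⟩
  obtain ⟨j, hj, rfl⟩ := mem_iff_getElem.1 hb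
  simp only [length_take, length_drop, lt_min_iff] at hj
  simpa [getD_eq_getElem?_getD, getElem?_eq_getElem (show i + j < x.length by omega)]
    using hconst (i + j) (by omega) (by omega)

theorem runAt.getLast?_take_ne {x : List Bool} {i ℓ : ℕ} (h : runAt x i ℓ) :
    (x.take i).getLast? ≠ some (x.getD i false) := by
  obtain ⟨-, hlen, -, hleft, -⟩ := h
  intro ha
  rcases hleft with rfl | hne
  · simp at ha
  · have hi : i ≠ 0 := by rintro rfl; simp at ha
    rw [getLast?_take, if_neg hi, getElem?_eq_getElem (by omega), Option.some_or,
      Option.some_inj] at ha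
    simp [getD_eq_getElem?_getD, getElem?_eq_getElem (show i - 1 < x.length by omega), ha] at hne

theorem runAt.head?_drop_ne {x : List Bool} {i ℓ : ℕ} (h : runAt x i ℓ) :
    (x.drop (i + ℓ)).head? ≠ some (x.getD i false) := by
  obtain ⟨-, -, -, -, hright⟩ := h
  intro hb
  rcases hright with heq | hne
  · simp [heq] at hb
  · simp only [head?_drop] at hb
    simp [getD_eq_getElem?_getD, hb] at hne

theorem deleteIdxs_singleton (x : List Bool) (k : ℕ) : deleteIdxs x {k} = x.eraseIdx k := by
  induction x generalizing k with
  | nil => rfl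
  | cons a t ih =>
    cases k with
    | zero =>
      simp only [deleteIdxs, length_cons, range_succ_eq_map, filter_cons, filter_map,
        Function.comp_def]
      simp +contextual [ext_getElem_iff, getElem?_pos]
    | succ k => simpa [deleteIdxs, range_succ_eq_map, filter_map, Function.comp_def] using ih k

theorem tau1_append {A B : List Bool} (h : ∀ a ∈ A.getLast?, ∀ b ∈ B.head?, a ≠ b) :
    tau1 (A ++ B) = tau1 A ++ tau1 B := by
  rw [tau1, splitBy_append (by simpa using h)]
  simp [tau1]

theorem tau1_replicate_true {n : ℕ} (hn : n ≠ 0) : tau1 (replicate n true) = [n] := by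
  rw [tau1, splitBy_of_isChain (by simpa using hn) (isChain_replicate_of_rel n (by simp))]
  obtain ⟨m, rfl⟩ := Nat.exists_eq_succ_of_ne_zero hn
  simp [replicate_succ, filter_cons]

theorem tau1_append_replicate_true_append {A B : List Bool} {n : ℕ} (hn : n ≠ 0)
    (hA : A.getLast? ≠ some true) (hB : B.head? ≠ some true) :
    tau1 (A ++ replicate n true ++ B) = tau1 A ++ n :: tau1 B := by
  obtain ⟨m, rfl⟩ := Nat.exists_eq_succ_of_ne_zero hn
  rw [tau1_append, tau1_append, tau1_replicate_true hn]
  · simp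
  · simpa [replicate_succ] using hA
  · simpa [replicate_succ'] using hB

theorem tau1_eraseIdx_of_runs {x : List Bool} {k ℓ₁ ℓ₂ : ℕ} (hval : x.getD k false = false)
    (hk : ℓ₁ ≤ k) (h₁ : runAt x (k - ℓ₁) ℓ₁) (hv₁ : x.getD (k - ℓ₁) false = true)
    (h₂ : runAt x (k + 1) ℓ₂) (hv₂ : x.getD (k + 1) false = true) :
    ∃ P Q, tau1 x = P ++ ℓ₁ :: ℓ₂ :: Q ∧ tau1 (x.eraseIdx k) = P ++ (ℓ₁ + ℓ₂) :: Q := by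
  set A := x.take (k - ℓ₁)
  set B := x.drop (k + 1 + ℓ₂)
  have hA : A.getLast? ≠ some true := hv₁ ▸ h₁.getLast?_take_ne
  have hB : B.head? ≠ some true := hv₂ ▸ h₂.head?_drop_ne
  have hL : x.take k = A ++ replicate ℓ₁ true := by
    rw [← hv₁, ← h₁.take_drop, ← take_add, Nat.sub_add_cancel hk]
  have hR : x.drop (k + 1) = replicate ℓ₂ true ++ B := by
    conv_lhs => rw [← take_append_drop ℓ₂ (x.drop (k + 1)), drop_drop]
    rw [h₂.take_drop, hv₂]
  have hx : x = x.take k ++ false :: x.drop (k + 1) := by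
    have hlt : k < x.length := by have := h₂.2.1; omega
    rw [← hval, getD_eq_getElem?_getD, getElem?_eq_getElem hlt, Option.getD_some,
      ← drop_eq_getElem_cons, take_append_drop]
  have hn₁ : ℓ₁ ≠ 0 := h₁.1.ne'
  have hn₂ : ℓ₂ ≠ 0 := h₂.1.ne'
  refine ⟨tau1 A, tau1 B, ?_, ?_⟩
  · have hfalse : false :: (replicate ℓ₂ true ++ B) = [false] ++ replicate ℓ₂ true ++ B := rfl
    rw [hx, hL, hR, tau1_append_replicate_true_append hn₁ hA (by simp), hfalse,
      tau1_append_replicate_true_append hn₂ (by simp) hB]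
    rfl
  · rw [eraseIdx_eq_take_drop_succ, hL, hR, ← append_assoc, append_assoc A, ← replicate_add,
      tau1_append_replicate_true_append (by omega) hA hB]

theorem List.append_cons_inj_of_filter {α : Type*} {p : α → Bool} {f : α → α}
    {P Q P' Q' : List α} {m m' : α} (hm : p m) (hm' : p m') (hfm : f m ≠ m) (hfm' : f m' ≠ m')
    (h : P ++ m :: Q = P' ++ m' :: Q')
    (hf : P.filter p ++ f m :: Q.filter p = P'.filter p ++ f m' :: Q'.filter p) :
    P = P' ∧ m = m' ∧ Q = Q' := by
  induction P generalizing P' with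
  | nil =>
    cases P' with
    | nil => simpa using h
    | cons a P' =>
      obtain ⟨rfl, -⟩ := cons_eq_cons.1 h
      simp [hm] at hf
      exact absurd hf.1 hfm
  | cons a P ih =>
    cases P' with
    | nil =>
      obtain ⟨rfl, -⟩ := cons_eq_cons.1 h
      simp [hm'] at hf
      exact absurd hf.1.symm hfm'
    | cons a' P' =>
      simp only [cons_append, cons.injEq] at h
      obtain ⟨rfl, h⟩ := h
      obtain ⟨rfl, rfl, rfl⟩ := ih h (by cases hp : p a <;> simpa [filter_cons, hp] using hf)
      exact ⟨rfl, rfl, rfl⟩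

theorem filter_two_le_append_pair {P Q : List ℕ} {a b ℓ : ℕ} (hℓ : 2 ≤ ℓ)
    (hab : (a = 1 ∧ b = ℓ) ∨ (a = ℓ ∧ b = 1)) :
    (P ++ a :: b :: Q).filter (fun n => decide (2 ≤ n)) =
      P.filter (fun n => decide (2 ≤ n)) ++ ℓ :: Q.filter (fun n => decide (2 ≤ n)) := by
  rcases hab with ⟨rfl, rfl⟩ | ⟨rfl, rfl⟩ <;> simp [hℓ]

theorem oddIdxSum_cons_cons (a b : ℕ) (l : List ℕ) : oddIdxSum (a :: b :: l) = b + oddIdxSum l := by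
  have h : ∀ i, (i + 1 + 1) % 2 = i % 2 := by omega
  simp only [oddIdxSum, Finset.sum_filter, length_cons, Finset.sum_range_succ', getD_cons_succ, h]
  simp [add_comm]

theorem oddIdxSum_cons_congr (a b : ℕ) (l : List ℕ) : oddIdxSum (a :: l) = oddIdxSum (b :: l) := by
  simp [oddIdxSum, Finset.sum_filter, Finset.sum_range_succ']

theorem exists_oddIdxSum_append_swap : ∀ (P : List ℕ) (a b : ℕ) (Q : List ℕ), ∃ c,
    (oddIdxSum (P ++ a :: b :: Q) = c + b ∧ oddIdxSum (P ++ b :: a :: Q) = c + a) ∨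
    (oddIdxSum (P ++ a :: b :: Q) = c + a ∧ oddIdxSum (P ++ b :: a :: Q) = c + b)
  | [], a, b, Q => ⟨oddIdxSum Q, .inl (by simp [oddIdxSum_cons_cons, add_comm])⟩
  | [_], a, b, Q => ⟨oddIdxSum (b :: Q), .inr (by
      simp [oddIdxSum_cons_cons, add_comm, oddIdxSum_cons_congr a b Q])⟩
  | _ :: q :: P, a, b, Q => by
    obtain ⟨c, hc⟩ := exists_oddIdxSum_append_swap P a b Q
    exact ⟨q + c, by simpa [oddIdxSum_cons_cons, add_assoc] using hc⟩

theorem oddIdxSum_append_swap_modEq_iff {P Q : List ℕ} {a b n : ℕ} :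
    oddIdxSum (P ++ a :: b :: Q) ≡ oddIdxSum (P ++ b :: a :: Q) [MOD n] ↔ a ≡ b [MOD n] := by
  obtain ⟨c, ⟨h, h'⟩ | ⟨h, h'⟩⟩ := exists_oddIdxSum_append_swap P a b Q <;> rw [h, h']
  · exact ⟨fun hm => (Nat.ModEq.add_left_cancel' c hm).symm, fun hm => hm.symm.add_left c⟩
  · exact ⟨Nat.ModEq.add_left_cancel' c, Nat.ModEq.add_left c⟩

theorem tau1_determined_general (s : ℕ) (x x' y : List Bool)
    (hxs : ∀ i ℓ, runAt x i ℓ → ℓ ≤ s)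
    (k : ℕ) (hval : x.getD k false = false)
    (hnb : ∃ ℓ ℓ₁ ℓ₂, 3 ≤ ℓ ∧ ℓ₁ ≤ k ∧
      runAt x (k - ℓ₁) ℓ₁ ∧ x.getD (k - ℓ₁) false = true ∧
      runAt x (k + 1) ℓ₂ ∧ x.getD (k + 1) false = true ∧
      ((ℓ₁ = 1 ∧ ℓ₂ = ℓ) ∨ (ℓ₁ = ℓ ∧ ℓ₂ = 1)))
    (hy : y = deleteIdxs x ({k} : Finset ℕ))
    (k' : ℕ) (hval' : x'.getD k' false = false)
    (hnb' : ∃ ℓ ℓ₁ ℓ₂, 3 ≤ ℓ ∧ ℓ₁ ≤ k' ∧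
      runAt x' (k' - ℓ₁) ℓ₁ ∧ x'.getD (k' - ℓ₁) false = true ∧
      runAt x' (k' + 1) ℓ₂ ∧ x'.getD (k' + 1) false = true ∧
      ((ℓ₁ = 1 ∧ ℓ₂ = ℓ) ∨ (ℓ₁ = ℓ ∧ ℓ₂ = 1)))
    (hy' : y = deleteIdxs x' ({k'} : Finset ℕ))
    (htau : tauGe2 x = tauGe2 x')
    (hsum : oddIdxSum (tau1 x) ≡ oddIdxSum (tau1 x') [MOD s + 1]) :
    tau1 x = tau1 x' := by
  obtain ⟨ℓ, ℓ₁, ℓ₂, hℓ, hk₁, hr₁, hv₁, hr₂, hv₂, hor⟩ := hnb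
  obtain ⟨ℓ', ℓ₁', ℓ₂', hℓ', hk₁', hr₁', hv₁', hr₂', hv₂', hor'⟩ := hnb'
  obtain ⟨P, Q, hx, hyP⟩ := tau1_eraseIdx_of_runs hval hk₁ hr₁ hv₁ hr₂ hv₂
  obtain ⟨P', Q', hx', hyP'⟩ := tau1_eraseIdx_of_runs hval' hk₁' hr₁' hv₁' hr₂' hv₂'
  have hℓs : ℓ ≤ s := by
    rcases hor with ⟨rfl, rfl⟩ | ⟨rfl, rfl⟩
    exacts [hxs _ _ hr₂, hxs _ _ hr₁]
  have hmerge : ℓ₁ + ℓ₂ = ℓ + 1 := by omega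
  have hmerge' : ℓ₁' + ℓ₂' = ℓ' + 1 := by omega
  have htau1y : P ++ (ℓ + 1) :: Q = P' ++ (ℓ' + 1) :: Q' := by
    rw [← hmerge, ← hmerge', ← hyP, ← hyP', ← deleteIdxs_singleton, ← deleteIdxs_singleton, ← hy,
      ← hy']
  obtain ⟨rfl, hℓℓ', rfl⟩ := List.append_cons_inj_of_filter (p := fun n => decide (2 ≤ n))
    (f := (· - 1)) (by simp; omega) (by simp; omega) (by simp) (by simp) htau1y
    (by simpa [tauGe2, hx, hx', filter_two_le_append_pair (by omega) hor,
      filter_two_le_append_pair (by omega) hor'] using htau)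
  obtain rfl : ℓ = ℓ' := by omega
  rw [hx, hx'] at hsum ⊢
  have hne : ¬1 ≡ ℓ [MOD s + 1] := fun h => by
    have := h.eq_of_lt_of_lt (by omega) (by omega)
    omega
  rcases hor with ⟨rfl, rfl⟩ | ⟨rfl, rfl⟩ <;> rcases hor' with ⟨rfl, rfl⟩ | ⟨rfl, rfl⟩
  · rfl
  · exact absurd (oddIdxSum_append_swap_modEq_iff.1 hsum) hne
  · exact absurd (oddIdxSum_append_swap_modEq_iff.1 hsum).symm hne
  · rfl

/-- Claim 4: `τ₁(x)` is determined by `y`, `τ≥2(x)` and `Σ_{i odd} τ₁(x)_i mod (s+1)`,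
when `y` results from deleting a `0` forming a run of length 1 adjacent to runs of ones
of lengths `1` and `ℓ ≥ 3`, and all runs have length at most `s`. -/
theorem tau1_determined (s : ℕ) (hs : 0 < s) (x x' y : List Bool)
    (hxs : ∀ i ℓ, runAt x i ℓ → ℓ ≤ s) (hx's : ∀ i ℓ, runAt x' i ℓ → ℓ ≤ s)
    (k : ℕ) (hk : k < x.length)
    (hval : x.getD k false = false) (hrun : runAt x k 1)
    (hnb : ∃ ℓ ℓ₁ ℓ₂, 3 ≤ ℓ ∧ ℓ₁ ≤ k ∧
      runAt x (k - ℓ₁) ℓ₁ ∧ x.getD (k - ℓ₁) false = true ∧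
      runAt x (k + 1) ℓ₂ ∧ x.getD (k + 1) false = true ∧
      ((ℓ₁ = 1 ∧ ℓ₂ = ℓ) ∨ (ℓ₁ = ℓ ∧ ℓ₂ = 1)))
    (hy : y = deleteIdxs x ({k} : Finset ℕ))
    (k' : ℕ) (hk' : k' < x'.length)
    (hval' : x'.getD k' false = false) (hrun' : runAt x' k' 1)
    (hnb' : ∃ ℓ ℓ₁ ℓ₂, 3 ≤ ℓ ∧ ℓ₁ ≤ k' ∧
      runAt x' (k' - ℓ₁) ℓ₁ ∧ x'.getD (k' - ℓ₁) false = true ∧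
      runAt x' (k' + 1) ℓ₂ ∧ x'.getD (k' + 1) false = true ∧
      ((ℓ₁ = 1 ∧ ℓ₂ = ℓ) ∨ (ℓ₁ = ℓ ∧ ℓ₂ = 1)))
    (hy' : y = deleteIdxs x' ({k'} : Finset ℕ))
    (htau : tauGe2 x = tauGe2 x')
    (hsum : oddIdxSum (tau1 x) ≡ oddIdxSum (tau1 x') [MOD s + 1]) :
    tau1 x = tau1 x' :=
  tau1_determined_general s x x' y hxs k hval hnb hy k' hval' hnb' hy' htau hsum
end

section
/- Let ℓ be a positive integer and let c be a real number satisfying c · 2^{−ℓ−2} / (ℓ ln 2) > 1. Then lim_{n→∞} [1 − exp(−(c log₂ n) · 2^{−ℓ−2}/ℓ)]^{2n/(c log₂ n)} = 1. In particular, for every ℓ ≤ 6 this holds for any c ≥ 1065, and consequently for s = c log₂ n one has (A_{s/2,v})^{n/(s/2)} → 1 for every binary string v of length at most 6. -/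
/-! If `β = c 2^{-ℓ-2}/(ℓ ln 2)`, the base is `1 - n^{-β}` and the exponent is a constant times
`n / ln n`. Since `ln (1 - t) ≥ -t/(1-t)`, the power `(1 - t)^y` lies between `1 - yt/(1-t)` and `1`,
and here `y t ≍ n^{1-β} / ln n → 0` because `β > 1`. -/

open Real Filter Topology

lemma one_sub_mul_div_le_one_sub_rpow {t y : ℝ} (ht : t < 1) (hy : 0 ≤ y) :
    1 - y * t / (1 - t) ≤ (1 - t) ^ y := by
  have hpos : 0 < 1 - t := by linarith
  have hlog : -(t / (1 - t)) ≤ log (1 - t) := by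
    have h := one_sub_inv_le_log_of_pos hpos
    have hinv : 1 - (1 - t)⁻¹ = -(t / (1 - t)) := by field_simp; ring
    rwa [hinv] at h
  calc 1 - y * t / (1 - t) = y * -(t / (1 - t)) + 1 := by ring
    _ ≤ y * log (1 - t) + 1 := by gcongr
    _ ≤ exp (log (1 - t) * y) := by rw [mul_comm]; exact add_one_le_exp _
    _ = (1 - t) ^ y := (rpow_def_of_pos hpos y).symm

lemma tendsto_one_sub_rpow_nhds_one {α : Type*} {l : Filter α} {t y : α → ℝ}
    (ht : Tendsto t l (𝓝 0)) (hyt : Tendsto (fun a => y a * t a) l (𝓝 0))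
    (ht₀ : ∀ᶠ a in l, 0 ≤ t a) (hy : ∀ᶠ a in l, 0 ≤ y a) :
    Tendsto (fun a => (1 - t a) ^ y a) l (𝓝 1) := by
  have hlower : Tendsto (fun a => 1 - y a * t a / (1 - t a)) l (𝓝 1) := by
    simpa using tendsto_const_nhds.sub (hyt.div (tendsto_const_nhds.sub ht) (by norm_num))
  have ht₁ : ∀ᶠ a in l, t a < 1 := ht.eventually (gt_mem_nhds one_pos)
  refine tendsto_of_tendsto_of_tendsto_of_le_of_le' hlower tendsto_const_nhds ?_ ?_
  · filter_upwards [ht₁, hy] with a h₁ hya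
    exact one_sub_mul_div_le_one_sub_rpow h₁ hya
  · filter_upwards [ht₀, ht₁, hy] with a h₀ h₁ hya
    exact rpow_le_one (by linarith) (by linarith) hya

lemma tendsto_one_sub_rpow_neg_rpow_div_log {β a : ℝ} (hβ : 1 < β) (ha : 0 ≤ a) :
    Tendsto (fun x : ℝ => (1 - x ^ (-β)) ^ (a * x / log x)) atTop (𝓝 1) := by
  have hprod : Tendsto (fun x : ℝ => a * x / log x * x ^ (-β)) atTop (𝓝 0) := by
    have hdecay : Tendsto (fun x : ℝ => a * x ^ (-(β - 1)) / log x) atTop (𝓝 0) :=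
      (tendsto_const_nhds.mul (tendsto_rpow_neg_atTop (by linarith))).div_atTop tendsto_log_atTop
    refine hdecay.congr' ?_
    filter_upwards [eventually_gt_atTop 0] with x hx
    have hx' : x * x ^ (-β) = x ^ (-(β - 1)) := by
      rw [← rpow_one_add' hx.le (by linarith)]
      ring_nf
    rw [← hx']
    ring
  refine tendsto_one_sub_rpow_nhds_one (tendsto_rpow_neg_atTop (by linarith)) hprod ?_ ?_
  · filter_upwards [eventually_ge_atTop 0] with x hx using rpow_nonneg hx _
  · filter_upwards [eventually_ge_atTop 1] with x hx
    exact div_nonneg (mul_nonneg ha (by linarith)) (log_nonneg hx)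

lemma one_lt_div_mul_log_two_of_le_six {ℓ : ℕ} (hℓ : 0 < ℓ) (hℓ6 : ℓ ≤ 6) {c : ℝ} (hc : 1065 ≤ c) :
    1 < c * (1 / 2 ^ (ℓ + 2)) / (ℓ * log 2) := by
  -- Tight: the worst case `ℓ = 6` needs `1065 > 2^8 · 6 · log 2 ≈ 1064.7`.
  have hlog2 : log 2 < 0.6931471808 := log_two_lt_d9
  have hℓ' : (0 : ℝ) < ℓ := Nat.cast_pos.mpr hℓ
  have hℓ6' : (ℓ : ℝ) ≤ 6 := by exact_mod_cast hℓ6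
  have hpow : (2 : ℝ) ^ (ℓ + 2) ≤ 2 ^ 8 := pow_le_pow_right₀ one_le_two (by omega)
  have hc' : 1065 / 2 ^ 8 ≤ c * (1 / 2 ^ (ℓ + 2)) := by
    rw [mul_one_div]
    exact div_le_div₀ (by linarith) hc (by positivity) hpow
  rw [lt_div_iff₀ (by positivity)]
  nlinarith [mul_le_mul hℓ6' hlog2.le (log_pos one_lt_two).le (by norm_num : (0 : ℝ) ≤ 6)]

/-- Lemma 8: if `c 2^{-ℓ-2}/(ℓ ln 2) > 1` then
`(1 - exp(-(c log₂ n) 2^{-ℓ-2}/ℓ))^{2n/(c log₂ n)} → 1`; in particular the hypothesis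
holds for every `ℓ ≤ 6` and every `c ≥ 1065`. -/
theorem limit_one :
    (∀ ℓ : ℕ, 0 < ℓ → ∀ c : ℝ,
      1 < c * (1 / 2 ^ (ℓ + 2)) / (ℓ * Real.log 2) →
      Filter.Tendsto (fun n : ℕ =>
          (1 - Real.exp (-(c * Real.logb 2 n * (1 / 2 ^ (ℓ + 2)) / ℓ))) ^
            (2 * (n : ℝ) / (c * Real.logb 2 n)))
        Filter.atTop (nhds 1)) ∧
    (∀ ℓ : ℕ, 0 < ℓ → ℓ ≤ 6 → ∀ c : ℝ, 1065 ≤ c →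
      1 < c * (1 / 2 ^ (ℓ + 2)) / (ℓ * Real.log 2)) := by
  refine ⟨fun ℓ hℓ c hβ => ?_, fun ℓ hℓ hℓ6 c hc => one_lt_div_mul_log_two_of_le_six hℓ hℓ6 hc⟩
  set β := c * (1 / 2 ^ (ℓ + 2)) / (ℓ * log 2)
  have hc : 0 < c := by
    by_contra! hc
    have : β ≤ 0 := div_nonpos_of_nonpos_of_nonneg
      (mul_nonpos_of_nonpos_of_nonneg hc (by positivity)) (by positivity)
    linarith
  refine ((tendsto_one_sub_rpow_neg_rpow_div_log hβ (a := 2 * log 2 / c) (by positivity)).comp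
    tendsto_natCast_atTop_atTop).congr' ?_
  filter_upwards [eventually_gt_atTop 0] with n hn
  have hn' : (0 : ℝ) < n := by exact_mod_cast hn
  have hℓ' : (0 : ℝ) < ℓ := by exact_mod_cast hℓ
  have hbase : (n : ℝ) ^ (-β) = exp (-(c * logb 2 n * (1 / 2 ^ (ℓ + 2)) / ℓ)) := by
    rw [rpow_def_of_pos hn', logb]
    congr 1
    simp only [β]
    field_simp
  have hexp : 2 * log 2 / c * n / log n = 2 * (n : ℝ) / (c * logb 2 n) := by
    rw [logb]
    field_simp
  simp only [Function.comp_apply, hbase, hexp]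
end

section
/- For each integer n ≥ 2 let s_n = ⌈1065 · log₂ n⌉. Then the proportion of binary strings x ∈ {0,1}^n with the property that every window of ⌈s_n/2⌉ consecutive symbols of x contains each of the strings 0000, 1111, 11011, and 110011 as a contiguous substring tends to 1 as n → ∞. (Consequently, in any such x there are at most s_n symbols between consecutive occurrences of each of these four strings, every run of x has length at most s_n, and the constrained set C_{T2}(n, s_n) satisfies log₂|C_{T2}(n, s_n)| ≥ n − O(1).) -/
noncomputable def sN (n : ℕ) : ℕ := ⌈(1065 : ℝ) * Real.logb 2 n⌉₊

noncomputable def winLen (n : ℕ) : ℕ := (sN n + 1) / 2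

open Finset Function Fintype Filter Topology

section Blocks
variable {ι κ τ α : Type*} [Fintype ι] [DecidableEq ι] [Fintype κ] [Fintype τ] [Fintype α]
  [DecidableEq α]

theorem card_filter_forall_block_ne_le {pos : τ × κ → ι} (hpos : Injective pos) (b : κ → α) :
    #{x : ι → α | ∀ t, (fun j => x (pos (t, j))) ≠ b} ≤
      (card α ^ card κ - 1) ^ card τ * card α ^ (card ι - card τ * card κ) := by
  classical
  let restrict : (ι → α) → (τ → κ → α) × ({i // i ∉ Set.range pos} → α) :=
    fun x => (fun t j => x (pos (t, j)), fun i => x i)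
  have hinj : Injective restrict := by
    intro x y h
    funext i
    by_cases hi : i ∈ Set.range pos
    · obtain ⟨⟨t, j⟩, rfl⟩ := hi
      exact congrFun (congrFun (congrArg Prod.fst h) t) j
    · exact congrFun (congrArg Prod.snd h) ⟨i, hi⟩
  calc _ ≤ #(piFinset (fun _ : τ => univ.erase b) ×ˢ
          (univ : Finset ({i // i ∉ Set.range pos} → α))) :=
        card_le_card_of_injOn restrict (fun x hx => by simpa [restrict] using hx) hinj.injOn
    _ = _ := by
      simp only [card_product, card_piFinset, prod_const, card_erase_of_mem (mem_univ b),
        card_univ, card_fun, card_subtype_compl, Set.card_range_of_injective hpos, card_prod]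

theorem cast_card_filter_forall_block_ne_le [Nonempty α] {pos : τ × κ → ι} (hpos : Injective pos)
    (b : κ → α) :
    (#{x : ι → α | ∀ t, (fun j => x (pos (t, j))) ≠ b} : ℝ) ≤
      (1 - ((card α : ℝ) ^ card κ)⁻¹) ^ card τ * card α ^ card ι := by
  have hle : card τ * card κ ≤ card ι := by
    simpa using card_le_of_injective pos hpos
  obtain ⟨N, hN⟩ := Nat.exists_eq_add_of_le hle
  calc _ ≤ (((card α ^ card κ - 1) ^ card τ * card α ^ (card ι - card τ * card κ) : ℕ) : ℝ) := by
        exact_mod_cast card_filter_forall_block_ne_le hpos b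
    _ = _ := by
      have : (card α : ℝ) ^ card κ ≠ 0 := by positivity
      rw [hN, Nat.add_sub_cancel_left]
      push_cast [Nat.one_le_pow _ _ card_pos]
      rw [pow_add, mul_comm (card τ), pow_mul, ← mul_assoc, ← mul_pow, sub_mul, one_mul,
        inv_mul_cancel₀ this]

end Blocks

theorem List.take_drop_add_infix_take_drop {α : Type*} (l : List α) {i a k m : ℕ}
    (h : a + k ≤ m) : (l.drop (i + a)).take k <:+: (l.drop i).take m := by
  have : (l.drop (i + a)).take k = (((l.drop i).take m).drop a).take k := by
    rw [List.drop_take, List.take_take, List.drop_drop, min_eq_left (by omega)]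
  rw [this]
  exact (List.take_prefix _ _).isInfix.trans (List.drop_suffix _ _).isInfix

theorem List.prefix_ofFn_getD {α : Type*} [Inhabited α] {w : List α} {k : ℕ} (hw : w.length ≤ k) :
    w <+: List.ofFn (fun j : Fin k => w.getD j default) := by
  rw [List.prefix_iff_eq_take]
  apply List.ext_getElem (by simpa using hw)
  intro j hj _
  simp [hj]

section Windows
variable {α : Type*} [Fintype α] [DecidableEq α] [Inhabited α]

theorem card_filter_not_infix_window_le {n k m i : ℕ} (him : i + m ≤ n) {w : List α}
    (hw : w.length ≤ k) :
    (#{x : Fin n → α | ¬ w <:+: ((List.ofFn x).drop i).take m} : ℝ) ≤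
      (1 - ((card α : ℝ) ^ k)⁻¹) ^ (m / k) * card α ^ n := by
  have hblocks : i + m / k * k ≤ n := by have := Nat.div_mul_le_self m k; omega
  have hend (t : Fin (m / k)) : k * t + k ≤ m :=
    (Nat.mul_le_mul_left k t.isLt).trans (Nat.mul_div_le m k)
  -- `pos (t, j) = i + (j + k * t)`: position `j` of the `t`-th block of the window
  let pos : Fin (m / k) × Fin k → Fin n :=
    fun p => Fin.castLE hblocks (Fin.natAdd i (finProdFinEquiv p))
  have hpos : Injective pos :=
    (Fin.castLE_injective _).comp ((Fin.natAdd_injective _ i).comp finProdFinEquiv.injective)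
  have hblock (x : Fin n → α) (t : Fin (m / k)) :
      List.ofFn (fun j => x (pos (t, j))) = ((List.ofFn x).drop (i + k * t)).take k := by
    apply List.ext_getElem
    · have := hend t
      simp only [List.length_ofFn, List.length_take, List.length_drop]
      omega
    · intro j _ _
      simp only [List.getElem_ofFn, List.getElem_take, List.getElem_drop]
      congr 1
      ext
      simp only [Fin.val_castLE, Fin.val_natAdd, finProdFinEquiv_apply_val, pos]
      ring
  set b : Fin k → α := fun j => w.getD j default
  calc _ ≤ (#{x : Fin n → α | ∀ t, (fun j => x (pos (t, j))) ≠ b} : ℝ) := by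
        refine Nat.cast_le.mpr (card_le_card fun x => ?_)
        simp only [mem_filter, mem_univ, true_and]
        intro hx t hbt
        apply hx
        have hsub := (List.ofFn x).take_drop_add_infix_take_drop (i := i) (hend t)
        rw [← hblock, hbt] at hsub
        exact (List.prefix_ofFn_getD hw).isInfix.trans hsub
    _ ≤ _ := by
      have := cast_card_filter_forall_block_ne_le hpos b
      simp only [Fintype.card_fin] at this
      convert this

open Classical in
theorem card_filter_exists_window_not_infix_le {n k m : ℕ} (P : Finset (List α))
    (hP : ∀ w ∈ P, w.length ≤ k) :
    (#{x : Fin n → α | ∃ i, i + m ≤ n ∧ ∃ w ∈ P, ¬ w <:+: ((List.ofFn x).drop i).take m} : ℝ) ≤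
      (n + 1) * #P * ((1 - ((card α : ℝ) ^ k)⁻¹) ^ (m / k) * card α ^ n) := by
  set I := (range (n + 1)).filter (· + m ≤ n)
  set B := (1 - ((card α : ℝ) ^ k)⁻¹) ^ (m / k) * card α ^ n
  have hcover : ({x : Fin n → α | ∃ i, i + m ≤ n ∧ ∃ w ∈ P,
        ¬ w <:+: ((List.ofFn x).drop i).take m} : Finset _) ⊆
      I.biUnion fun i => P.biUnion fun w => {x | ¬ w <:+: ((List.ofFn x).drop i).take m} := by
    intro x hx
    obtain ⟨i, hi, w, hw, hx⟩ := (mem_filter.mp hx).2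
    simp only [mem_biUnion, mem_filter, mem_univ, true_and, mem_range, I]
    exact ⟨i, ⟨by omega, hi⟩, w, hw, hx⟩
  calc _ ≤ ∑ i ∈ I, ∑ w ∈ P, (#{x : Fin n → α | ¬ w <:+: ((List.ofFn x).drop i).take m} : ℝ) := by
        exact_mod_cast (card_le_card hcover).trans
          (card_biUnion_le.trans (sum_le_sum fun i _ => card_biUnion_le))
    _ ≤ ∑ i ∈ I, ∑ w ∈ P, B := by
        gcongr with i hi w hw
        exact card_filter_not_infix_window_le (mem_filter.mp hi).2 (hP w hw)
    _ ≤ _ := by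
        have hI : (#I : ℝ) ≤ n + 1 := by
          exact_mod_cast (card_filter_le _ _).trans (Finset.card_range _).le
        have hB : 0 ≤ B := by
          have : (1 : ℝ) ≤ (card α : ℝ) ^ k := one_le_pow₀ (by exact_mod_cast Fintype.card_pos)
          exact mul_nonneg (pow_nonneg (sub_nonneg.mpr (inv_le_one_of_one_le₀ this)) _)
            (by positivity)
        simp only [sum_const, nsmul_eq_mul, ← mul_assoc]
        gcongr

theorem one_sub_le_card_forall_window_infix_div {n k m : ℕ} (P : Finset (List α))
    (hP : ∀ w ∈ P, w.length ≤ k) :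
    1 - (n + 1) * #P * (1 - ((card α : ℝ) ^ k)⁻¹) ^ (m / k) ≤
      (Nat.card {x : Fin n → α // ∀ i, i + m ≤ n → ∀ w ∈ P,
        w <:+: ((List.ofFn x).drop i).take m} : ℝ) / card α ^ n := by
  classical
  have hsplit := card_filter_add_card_filter_not (s := (univ : Finset (Fin n → α)))
    fun x => ∀ i, i + m ≤ n → ∀ w ∈ P, w <:+: ((List.ofFn x).drop i).take m
  simp only [not_forall, exists_prop, card_univ, Fintype.card_fun, Fintype.card_fin] at hsplit
  have hbad := card_filter_exists_window_not_infix_le (n := n) (m := m) P hP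
  rw [Nat.card_eq_fintype_card, Fintype.card_subtype, le_div_iff₀ (by positivity)]
  have hsplit' := congrArg (Nat.cast : ℕ → ℝ) hsplit
  push_cast at hsplit'
  linarith [sub_mul (1 : ℝ) ((n + 1) * #P * (1 - ((card α : ℝ) ^ k)⁻¹) ^ (m / k)) (card α ^ n)]

end Windows

theorem tendsto_natCast_add_one_mul_pow_of_log_le {q : ℝ} {c : ℕ} (hq0 : 0 ≤ q) (hq1 : q ≤ 1)
    (hq : 2 * q ^ c < 1) {T : ℕ → ℕ} (hT : ∀ n, c * Nat.log 2 n ≤ T n) :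
    Tendsto (fun n : ℕ => ((n : ℝ) + 1) * q ^ T n) atTop (𝓝 0) := by
  have hlog : Tendsto (Nat.log 2) atTop atTop :=
    tendsto_atTop_atTop.mpr fun b =>
      ⟨2 ^ b, fun n hn => (Nat.log_pow one_lt_two b).symm.le.trans (Nat.log_mono_right hn)⟩
  have hgeom := ((tendsto_pow_atTop_nhds_zero_of_lt_one (by positivity) hq).comp hlog).const_mul 2
  rw [mul_zero] at hgeom
  refine squeeze_zero (fun n => by positivity) (fun n => ?_) hgeom
  have hn : (n : ℝ) + 1 ≤ 2 ^ (Nat.log 2 n + 1) := by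
    exact_mod_cast Nat.lt_pow_succ_log_self one_lt_two n
  calc ((n : ℝ) + 1) * q ^ T n ≤ 2 ^ (Nat.log 2 n + 1) * q ^ (c * Nat.log 2 n) :=
        mul_le_mul hn (pow_le_pow_of_le_one hq0 hq1 (hT n)) (by positivity) (by positivity)
    _ = 2 * (2 * q ^ c) ^ Nat.log 2 n := by
        rw [pow_succ, mul_pow, pow_mul]; ring

theorem mul_natLog_le_sN (n : ℕ) : 1065 * Nat.log 2 n ≤ sN n := by
  have : ((1065 * Nat.log 2 n : ℕ) : ℝ) ≤ 1065 * Real.logb 2 n := by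
    push_cast
    exact mul_le_mul_of_nonneg_left (by exact_mod_cast Real.natLog_le_logb n 2) (by norm_num)
  exact_mod_cast this.trans (Nat.le_ceil _)

theorem mul_natLog_le_winLen_div_six (n : ℕ) : 88 * Nat.log 2 n ≤ winLen n / 6 := by
  have := mul_natLog_le_sN n
  unfold winLen
  omega

/-- The proportion of strings of length `n` in which every window of `⌈sₙ/2⌉` consecutive
symbols contains each of `0000`, `1111`, `11011`, `110011` tends to `1`. -/
theorem constrained_proportion_tendsto_one :
    Filter.Tendsto (fun n : ℕ =>
      (Nat.card {x : Fin n → Bool //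
        ∀ i, i + winLen n ≤ n →
          (w0000 <:+: ((List.ofFn x).drop i).take (winLen n)) ∧
          (w1111 <:+: ((List.ofFn x).drop i).take (winLen n)) ∧
          (w11011 <:+: ((List.ofFn x).drop i).take (winLen n)) ∧
          (w110011 <:+: ((List.ofFn x).drop i).take (winLen n))} : ℝ) / 2 ^ n)
      Filter.atTop (nhds 1) := by
  set P : Finset (List Bool) := {w0000, w1111, w11011, w110011}
  have hP : ∀ w ∈ P, w.length ≤ 6 := by decide
  have hsmall := tendsto_natCast_add_one_mul_pow_of_log_le (q := 63 / 64) (by norm_num)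
    (by norm_num) (by norm_num) mul_natLog_le_winLen_div_six
  refine tendsto_of_tendsto_of_tendsto_of_le_of_le (by simpa using (hsmall.const_mul 4).const_sub 1)
    tendsto_const_nhds (fun n => ?_) (fun n => ?_)
  · have h := one_sub_le_card_forall_window_infix_div (n := n) (m := winLen n) P hP
    rw [show #P = 4 by decide] at h
    simp only [P, mem_insert, mem_singleton, forall_eq_or_imp, forall_eq] at h
    norm_num at h
    linarith
  · have hall : (Nat.card (Fin n → Bool) : ℝ) = 2 ^ n := by simp
    rw [div_le_one (by positivity), ← hall]
    exact Nat.cast_le.mpr (Finite.card_subtype_le _)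
end
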